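/- Let $(\gamma_n)$ be distinct real numbers, $(v_n)$ positive with $\sum v_n/(1+\gamma_n^2) < \infty$, $\varphi$ the associated Herglotz function, and $\alpha \in \mathbb{R}$. If $(\alpha - \varphi(z))^{-1}$ is NOT a purely atomic Herglotz function (i.e., in its representation either the linear coefficient $c > 0$ or the spectral measure has a nonzero continuous part), then the discrete Hilbert transform $H_v(\Gamma, \Lambda(\alpha)) : \ell^2_v \to \ell^2_{w(\alpha)}$ is not unitary. -/

import Mathlib

/-!
Test the isometry on the resolvent vectors `a_z n = ψ z / (z - γ n)`, where `ψ = (α - φ)⁻¹` and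
`Im z > 0`. Since `φ = α` on the level set, a partial-fraction computation gives
`(H a_z) j = 1 / (λ_j - z)`. By polarization the isometry preserves the inner products of these
vectors, and the partial-fraction identity turns this into
`Φ z - conj (Φ ζ) = ψ z - conj (ψ ζ)`, where `Φ` is the Herglotz function of the atoms `λ_j`
with masses `w j`. Hence `ψ - Φ` is a real constant, so `ψ` is purely atomic with spectral
measure `∑ j, w j • δ_{λ_j}`.
-/

open MeasureTheory Complex

/-- `ψ` has a purely atomic Herglotz representation on the upper half-plane:
linear coefficient `c = 0` and purely atomic spectral measure `μ`. -/
def IsPurelyAtomicHerglotzRep (ψ : ℂ → ℂ) : Prop :=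
  ∃ (b : ℝ) (μ : Measure ℝ),
    (∃ S : Set ℝ, S.Countable ∧ μ Sᶜ = 0) ∧
    (∫⁻ t, ENNReal.ofReal (1 / (1 + t ^ 2)) ∂μ < ⊤) ∧
    ∀ z : ℂ, 0 < z.im →
      ψ z = (b : ℂ) + ∫ t, (1 / ((t : ℂ) - z) - (t : ℂ) / (1 + (t : ℂ) ^ 2)) ∂μ

open scoped ComplexConjugate

noncomputable def herglotzKernel (t : ℝ) (z : ℂ) : ℂ :=
  1 / ((t : ℂ) - z) - (t : ℂ) / (1 + (t : ℂ) ^ 2)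

noncomputable def atomicHerglotz {X : Type*} (t p : X → ℝ) (z : ℂ) : ℂ :=
  ∑' x, (p x : ℂ) * herglotzKernel (t x) z

lemma ofReal_sub_ne_zero_of_im_ne_zero (t : ℝ) {z : ℂ} (hz : z.im ≠ 0) : (t : ℂ) - z ≠ 0 := by
  intro h
  apply hz
  simpa using congrArg Complex.im h

lemma one_add_ofReal_sq_ne_zero (t : ℝ) : 1 + (t : ℂ) ^ 2 ≠ 0 := by
  exact_mod_cast (by positivity : (1 + t ^ 2 : ℝ) ≠ 0)

lemma one_div_mul_le_half_add (a b : ℝ) : 1 / (a * b) ≤ (1 / a ^ 2 + 1 / b ^ 2) / 2 := by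
  have h := two_mul_le_add_sq (1 / a) (1 / b)
  rw [mul_assoc, one_div_mul_one_div, div_pow, div_pow, one_pow] at h
  linarith

lemma exists_pos_mul_le_normSq_ofReal_sub {z : ℂ} (hz : z.im ≠ 0) :
    ∃ c > 0, ∀ t : ℝ, c * (1 + t ^ 2) ≤ normSq ((t : ℂ) - z) := by
  refine ⟨min (z.im ^ 2) (1 / 2) / (1 + 2 * z.re ^ 2), by positivity, fun t => ?_⟩
  have hnormSq : normSq ((t : ℂ) - z) = (t - z.re) ^ 2 + z.im ^ 2 := by
    simp [normSq_apply]
    ring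
  rw [hnormSq, div_mul_eq_mul_div, div_le_iff₀ (by positivity)]
  -- `1 + t² ≤ (1 + 2 (re z)²) (1 + 2 (t - re z)²)` and `m (1 + 2 (t - re z)²) ≤ normSq (t - z)`
  -- for `m = min ((im z)², 1/2)`.
  have hm_le_sq : min (z.im ^ 2) (1 / 2) ≤ z.im ^ 2 := min_le_left _ _
  have hm_le_half : min (z.im ^ 2) (1 / 2) ≤ 1 / 2 := min_le_right _ _
  have hm_nonneg : (0 : ℝ) ≤ min (z.im ^ 2) (1 / 2) := le_min (by positivity) (by norm_num)
  nlinarith [sq_nonneg (t - 2 * z.re), sq_nonneg (t - z.re), sq_nonneg z.re,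
    mul_le_mul_of_nonneg_right hm_le_half (sq_nonneg (t - z.re)),
    mul_le_mul_of_nonneg_right hm_le_sq (sq_nonneg z.re)]

lemma herglotzKernel_eq_div (t : ℝ) {z : ℂ} (h : (t : ℂ) - z ≠ 0) :
    herglotzKernel t z = (1 + t * z) / (((t : ℂ) - z) * (1 + (t : ℂ) ^ 2)) := by
  have hden := one_add_ofReal_sq_ne_zero t
  rw [herglotzKernel]
  field_simp
  ring

lemma norm_one_add_mul_le (t : ℝ) (z : ℂ) :
    ‖1 + t * z‖ ≤ √(1 + t ^ 2) * √(1 + ‖z‖ ^ 2) := by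
  rw [← Real.sqrt_mul (by positivity), Real.le_sqrt (by positivity) (by positivity)]
  calc ‖1 + t * z‖ ^ 2 ≤ (1 + |t| * ‖z‖) ^ 2 := by
        gcongr
        simpa using norm_add_le (1 : ℂ) (t * z)
    _ ≤ (1 + t ^ 2) * (1 + ‖z‖ ^ 2) := by
        nlinarith [sq_nonneg (|t| - ‖z‖), sq_abs t]

lemma norm_herglotzKernel_le (t : ℝ) {z : ℂ} (h : (t : ℂ) - z ≠ 0) :
    ‖herglotzKernel t z‖ ≤ √(1 + ‖z‖ ^ 2) * (1 / normSq ((t : ℂ) - z) + 1 / (1 + t ^ 2)) / 2 := by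
  set B := √(1 + t ^ 2)
  have hB2 : B ^ 2 = 1 + t ^ 2 := Real.sq_sqrt (by positivity)
  have hB : 0 < B := Real.sqrt_pos.mpr (by positivity)
  have hA : 0 < ‖(t : ℂ) - z‖ := norm_pos_iff.mpr h
  have hden : ‖((t : ℂ) - z) * (1 + (t : ℂ) ^ 2)‖ = ‖(t : ℂ) - z‖ * B ^ 2 := by
    rw [norm_mul, hB2, ← ofReal_pow, ← ofReal_one, ← ofReal_add, norm_real,
      Real.norm_of_nonneg (by positivity)]
  calc ‖herglotzKernel t z‖ = ‖1 + t * z‖ / (‖(t : ℂ) - z‖ * B ^ 2) := by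
        rw [herglotzKernel_eq_div t h, norm_div, hden]
    _ ≤ B * √(1 + ‖z‖ ^ 2) / (‖(t : ℂ) - z‖ * B ^ 2) := by
        gcongr
        exact norm_one_add_mul_le t z
    _ = √(1 + ‖z‖ ^ 2) * (1 / (‖(t : ℂ) - z‖ * B)) := by
        field_simp
    _ ≤ √(1 + ‖z‖ ^ 2) * ((1 / ‖(t : ℂ) - z‖ ^ 2 + 1 / B ^ 2) / 2) :=
        mul_le_mul_of_nonneg_left (one_div_mul_le_half_add _ _) (Real.sqrt_nonneg _)
    _ = _ := by
        rw [normSq_eq_norm_sq, hB2]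
        ring

lemma herglotzKernel_sub_herglotzKernel (t : ℝ) {z w : ℂ} (hz : (t : ℂ) - z ≠ 0)
    (hw : (t : ℂ) - w ≠ 0) :
    herglotzKernel t z - herglotzKernel t w = (z - w) / (((t : ℂ) - z) * ((t : ℂ) - w)) := by
  rw [herglotzKernel, herglotzKernel]
  field_simp
  ring

lemma conj_herglotzKernel (t : ℝ) (z : ℂ) :
    conj (herglotzKernel t z) = herglotzKernel t (conj z) := by
  simp [herglotzKernel]

lemma herglotzKernel_ofReal (t s : ℝ) :
    herglotzKernel t s = ((1 / (t - s) - t / (1 + t ^ 2) : ℝ) : ℂ) := by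
  push_cast [herglotzKernel]
  rfl

section WeightedSums

variable {X : Type*} {t p : X → ℝ}

lemma summable_div_normSq_ofReal_sub (hp : ∀ x, 0 ≤ p x)
    (hb : Summable fun x => p x / (1 + t x ^ 2)) {z : ℂ} (hz : z.im ≠ 0) :
    Summable fun x => p x / normSq ((t x : ℂ) - z) := by
  obtain ⟨c, hc, hle⟩ := exists_pos_mul_le_normSq_ofReal_sub hz
  refine (hb.mul_left c⁻¹).of_nonneg_of_le (fun x => div_nonneg (hp x) (normSq_nonneg _))
    fun x => ?_
  calc p x / normSq ((t x : ℂ) - z) ≤ p x / (c * (1 + t x ^ 2)) :=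
        div_le_div_of_nonneg_left (hp x) (by positivity) (hle (t x))
    _ = c⁻¹ * (p x / (1 + t x ^ 2)) := by field_simp

lemma summable_mul_herglotzKernel (hp : ∀ x, 0 ≤ p x)
    (hb : Summable fun x => p x / (1 + t x ^ 2)) {z : ℂ} (hz : ∀ x, (t x : ℂ) - z ≠ 0)
    (hsz : Summable fun x => p x / normSq ((t x : ℂ) - z)) :
    Summable fun x => p x * ‖herglotzKernel (t x) z‖ := by
  refine (((hsz.add hb).mul_left √(1 + ‖z‖ ^ 2)).div_const 2).of_nonneg_of_le
    (fun x => mul_nonneg (hp x) (norm_nonneg _)) fun x => ?_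
  calc p x * ‖herglotzKernel (t x) z‖
      ≤ p x * (√(1 + ‖z‖ ^ 2) * (1 / normSq ((t x : ℂ) - z) + 1 / (1 + t x ^ 2)) / 2) :=
        mul_le_mul_of_nonneg_left (norm_herglotzKernel_le (t x) (hz x)) (hp x)
    _ = _ := by ring

lemma summable_ofReal_mul_herglotzKernel (hp : ∀ x, 0 ≤ p x)
    (hb : Summable fun x => p x / (1 + t x ^ 2)) {z : ℂ} (hz : ∀ x, (t x : ℂ) - z ≠ 0)
    (hsz : Summable fun x => p x / normSq ((t x : ℂ) - z)) :
    Summable fun x => (p x : ℂ) * herglotzKernel (t x) z := by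
  refine Summable.of_norm ((summable_mul_herglotzKernel hp hb hz hsz).congr fun x => ?_)
  rw [norm_mul, norm_real, Real.norm_of_nonneg (hp x)]

lemma summable_div_ofReal_sub_mul_sub (hp : ∀ x, 0 ≤ p x) {z w : ℂ}
    (hsz : Summable fun x => p x / normSq ((t x : ℂ) - z))
    (hsw : Summable fun x => p x / normSq ((t x : ℂ) - w)) :
    Summable fun x => (p x : ℂ) / (((t x : ℂ) - z) * ((t x : ℂ) - w)) := by
  refine Summable.of_norm (((hsz.add hsw).div_const 2).of_nonneg_of_le (fun x => norm_nonneg _)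
    fun x => ?_)
  calc ‖(p x : ℂ) / (((t x : ℂ) - z) * ((t x : ℂ) - w))‖
      = p x * (1 / (‖(t x : ℂ) - z‖ * ‖(t x : ℂ) - w‖)) := by
        rw [norm_div, norm_mul, norm_real, Real.norm_of_nonneg (hp x)]
        ring
    _ ≤ p x * ((1 / ‖(t x : ℂ) - z‖ ^ 2 + 1 / ‖(t x : ℂ) - w‖ ^ 2) / 2) :=
        mul_le_mul_of_nonneg_left (one_div_mul_le_half_add _ _) (hp x)
    _ = _ := by
        rw [normSq_eq_norm_sq, normSq_eq_norm_sq]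
        ring

lemma atomicHerglotz_sub_atomicHerglotz (hp : ∀ x, 0 ≤ p x)
    (hb : Summable fun x => p x / (1 + t x ^ 2)) {z w : ℂ}
    (hz : ∀ x, (t x : ℂ) - z ≠ 0) (hw : ∀ x, (t x : ℂ) - w ≠ 0)
    (hsz : Summable fun x => p x / normSq ((t x : ℂ) - z))
    (hsw : Summable fun x => p x / normSq ((t x : ℂ) - w)) :
    atomicHerglotz t p z - atomicHerglotz t p w
      = (z - w) * ∑' x, (p x : ℂ) / (((t x : ℂ) - z) * ((t x : ℂ) - w)) := by
  rw [atomicHerglotz, atomicHerglotz, ← (summable_ofReal_mul_herglotzKernel hp hb hz hsz).tsum_sub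
    (summable_ofReal_mul_herglotzKernel hp hb hw hsw), ← tsum_mul_left]
  refine tsum_congr fun x => ?_
  rw [← mul_sub, herglotzKernel_sub_herglotzKernel (t x) (hz x) (hw x)]
  ring

lemma conj_atomicHerglotz (z : ℂ) : conj (atomicHerglotz t p z) = atomicHerglotz t p (conj z) := by
  simp only [atomicHerglotz, conj_tsum, map_mul, conj_ofReal, conj_herglotzKernel]

lemma atomicHerglotz_ofReal (s : ℝ) :
    atomicHerglotz t p s = ((∑' x, p x * (1 / (t x - s) - t x / (1 + t x ^ 2)) : ℝ) : ℂ) := by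
  simp only [atomicHerglotz, herglotzKernel_ofReal, ofReal_tsum, ofReal_mul]

lemma im_atomicHerglotz_pos (hp : ∀ x, 0 ≤ p x) (hb : Summable fun x => p x / (1 + t x ^ 2))
    {x₀ : X} (hx₀ : 0 < p x₀) {z : ℂ} (hz : 0 < z.im) : 0 < (atomicHerglotz t p z).im := by
  have hz' : (conj z).im ≠ 0 := by simpa using hz.ne'
  have hsz := summable_div_normSq_ofReal_sub hp hb hz.ne'
  have hS : 0 < ∑' x, p x / normSq ((t x : ℂ) - z) :=
    hsz.tsum_pos (fun x => div_nonneg (hp x) (normSq_nonneg _)) x₀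
      (div_pos hx₀ (normSq_pos.mpr (ofReal_sub_ne_zero_of_im_ne_zero _ hz.ne')))
  have hdiff := atomicHerglotz_sub_atomicHerglotz hp hb
    (fun x => ofReal_sub_ne_zero_of_im_ne_zero (t x) hz.ne')
    (fun x => ofReal_sub_ne_zero_of_im_ne_zero (t x) hz') hsz
    (summable_div_normSq_ofReal_sub hp hb hz')
  have hterm : ∀ x, (p x : ℂ) / (((t x : ℂ) - z) * ((t x : ℂ) - conj z))
      = ((p x / normSq ((t x : ℂ) - z) : ℝ) : ℂ) := fun x => by
    rw [ofReal_div, ← mul_conj, map_sub, conj_ofReal]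
  rw [tsum_congr hterm, ← ofReal_tsum, ← conj_atomicHerglotz, sub_conj, sub_conj] at hdiff
  have him : 2 * (atomicHerglotz t p z).im = 2 * z.im * ∑' x, p x / normSq ((t x : ℂ) - z) := by
    simpa using congrArg Complex.im hdiff
  nlinarith [mul_pos hz hS]

lemma sub_conj_mul_tsum_resolvent_mul_conj_resolvent (hp : ∀ x, 0 ≤ p x)
    (hb : Summable fun x => p x / (1 + t x ^ 2)) {z ζ : ℂ} (hz : 0 < z.im) (hζ : 0 < ζ.im) :
    (z - conj ζ) * ∑' x, 1 / ((t x : ℂ) - z) * conj (1 / ((t x : ℂ) - ζ)) * p x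
      = atomicHerglotz t p z - conj (atomicHerglotz t p ζ) := by
  have hζ' : (conj ζ).im ≠ 0 := by simpa using hζ.ne'
  have hz₀ := fun x => ofReal_sub_ne_zero_of_im_ne_zero (t x) hz.ne'
  have hζ₀ := fun x => ofReal_sub_ne_zero_of_im_ne_zero (t x) hζ'
  rw [conj_atomicHerglotz, atomicHerglotz_sub_atomicHerglotz hp hb hz₀ hζ₀
    (summable_div_normSq_ofReal_sub hp hb hz.ne') (summable_div_normSq_ofReal_sub hp hb hζ')]
  congr 1
  refine tsum_congr fun x => ?_
  simp only [map_div₀, map_one, map_sub, conj_ofReal]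
  field_simp

lemma hasSum_div_sub_mul_div_sub (hp : ∀ x, 0 ≤ p x)
    (hb : Summable fun x => p x / (1 + t x ^ 2)) {s : ℝ} (hs : ∀ x, t x ≠ s)
    (hss : Summable fun x => p x / (s - t x) ^ 2) {z : ℂ} (hz : z.im ≠ 0) (c : ℂ) :
    HasSum (fun x => c / (z - t x) * p x / (s - t x))
      (c * (atomicHerglotz t p z - atomicHerglotz t p s) / (z - s)) := by
  have hz₀ := fun x => ofReal_sub_ne_zero_of_im_ne_zero (t x) hz
  have hs₀ : ∀ x, (t x : ℂ) - s ≠ 0 := fun x => sub_ne_zero.mpr (by exact_mod_cast hs x)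
  have hsz := summable_div_normSq_ofReal_sub hp hb hz
  have hss' : Summable fun x => p x / normSq ((t x : ℂ) - s) := hss.congr fun x => by
    rw [← ofReal_sub, normSq_ofReal, ← sq, ← neg_sub, neg_sq]
  have hzs : z - s ≠ 0 := by
    intro h
    apply hz
    simpa using congrArg Complex.im h
  rw [atomicHerglotz_sub_atomicHerglotz hp hb hz₀ hs₀ hsz hss', mul_left_comm,
    mul_div_cancel_left₀ _ hzs]
  refine ((summable_div_ofReal_sub_mul_sub hp hsz hss').hasSum.mul_left c).congr_fun fun x => ?_
  rw [← neg_sub (t x : ℂ) z, ← neg_sub (t x : ℂ) s]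
  simp only [div_neg, neg_mul, neg_div, neg_neg]
  field_simp

end WeightedSums

lemma isPurelyAtomicHerglotzRep_of_eq_add_atomicHerglotz {X : Type*} [Countable X]
    {t p : X → ℝ} (hp : ∀ x, 0 ≤ p x) (hb : Summable fun x => p x / (1 + t x ^ 2))
    {ψ : ℂ → ℂ} (b : ℝ) (hψ : ∀ z : ℂ, 0 < z.im → ψ z = b + atomicHerglotz t p z) :
    IsPurelyAtomicHerglotzRep ψ := by
  set μ := Measure.sum fun x => ENNReal.ofReal (p x) • Measure.dirac (t x)
  refine ⟨b, μ, ⟨Set.range t, Set.countable_range t, ?_⟩, ?_, fun z hz => ?_⟩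
  · refine Measure.sum_apply_eq_zero.mpr fun x => ?_
    simp [Measure.dirac_apply' _ (Set.countable_range t).measurableSet.compl]
  · calc ∫⁻ s, ENNReal.ofReal (1 / (1 + s ^ 2)) ∂μ
        = ∑' x, ENNReal.ofReal (p x / (1 + t x ^ 2)) := by
          simp only [μ, lintegral_sum_measure, lintegral_smul_measure, lintegral_dirac]
          refine tsum_congr fun x => ?_
          rw [smul_eq_mul, ← ENNReal.ofReal_mul (hp x), mul_one_div]
      _ = ENNReal.ofReal (∑' x, p x / (1 + t x ^ 2)) :=
          (ENNReal.ofReal_tsum_of_nonneg (fun x => div_nonneg (hp x) (by positivity)) hb).symm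
      _ < ⊤ := ENNReal.ofReal_lt_top
  · rw [hψ z hz, integral_sum_dirac fun x => ENNReal.ofReal_ne_top]
    simp only [ENNReal.toReal_ofReal (hp _), real_smul]
    rfl

section Polarization

variable {X : Type*} {p : X → ℝ}

lemma summable_mul_conj_mul (hp : ∀ x, 0 ≤ p x) {f g : X → ℂ}
    (hf : Summable fun x => ‖f x‖ ^ 2 * p x) (hg : Summable fun x => ‖g x‖ ^ 2 * p x) :
    Summable fun x => f x * conj (g x) * p x := by
  refine Summable.of_norm (((hf.add hg).div_const 2).of_nonneg_of_le (fun x => norm_nonneg _)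
    fun x => ?_)
  rw [norm_mul, norm_mul, norm_real, Real.norm_of_nonneg (hp x), RCLike.norm_conj]
  nlinarith [mul_le_mul_of_nonneg_right (two_mul_le_add_sq ‖f x‖ ‖g x‖) (hp x)]

lemma hasSum_norm_add_mul_sq_mul (hp : ∀ x, 0 ≤ p x) {f g : X → ℂ}
    (hf : Summable fun x => ‖f x‖ ^ 2 * p x) (hg : Summable fun x => ‖g x‖ ^ 2 * p x) (c : ℂ) :
    HasSum (fun x => ‖f x + c * g x‖ ^ 2 * p x)
      ((∑' x, ‖f x‖ ^ 2 * p x) + ‖c‖ ^ 2 * (∑' x, ‖g x‖ ^ 2 * p x)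
        + 2 * (conj c * ∑' x, f x * conj (g x) * p x).re) := by
  have hcross := ((summable_mul_conj_mul hp hf hg).hasSum.mul_left (conj c)).mapL reCLM
  refine ((hf.hasSum.add (hg.hasSum.mul_left _)).add (hcross.mul_left 2)).congr_fun fun x => ?_
  simp only [reCLM_apply]
  have hcross_term : conj c * (f x * conj (g x) * p x) = f x * conj (c * g x) * (p x : ℂ) := by
    rw [map_mul]
    ring
  simp only [← normSq_eq_norm_sq, normSq_add, normSq_mul, hcross_term, re_mul_ofReal]
  ring

lemma tsum_mul_conj_mul_eq_of_forall_tsum_norm_add_mul_sq_eq {Y : Type*} {q : Y → ℝ}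
    (hp : ∀ x, 0 ≤ p x) (hq : ∀ y, 0 ≤ q y) {f g : X → ℂ} {f' g' : Y → ℂ}
    (hf : Summable fun x => ‖f x‖ ^ 2 * p x) (hg : Summable fun x => ‖g x‖ ^ 2 * p x)
    (hf' : Summable fun y => ‖f' y‖ ^ 2 * q y) (hg' : Summable fun y => ‖g' y‖ ^ 2 * q y)
    (h : ∀ c : ℂ, ∑' x, ‖f x + c * g x‖ ^ 2 * p x = ∑' y, ‖f' y + c * g' y‖ ^ 2 * q y) :
    ∑' x, f x * conj (g x) * p x = ∑' y, f' y * conj (g' y) * q y := by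
  have hc := fun c => (hasSum_norm_add_mul_sq_mul hp hf hg c).tsum_eq.symm.trans
    ((h c).trans (hasSum_norm_add_mul_sq_mul hq hf' hg' c).tsum_eq)
  -- `c = 0, ± 1` compare the squared norms and the real parts of the inner products, `c = I` the
  -- imaginary parts.
  have h0 := hc 0
  have h1 := hc 1
  have h2 := hc (-1)
  have h3 := hc I
  simp only [norm_zero, ne_eq, OfNat.ofNat_ne_zero, not_false_eq_true, zero_pow, zero_mul, add_zero,
    map_zero, zero_re, mul_zero, norm_one, one_pow, one_mul, map_one, norm_neg, map_neg, neg_mul,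
    neg_re, mul_neg, norm_I, conj_I, mul_re, I_re, I_im, zero_sub, neg_neg] at h0 h1 h2 h3
  apply Complex.ext <;> linarith

end Polarization

lemma exists_eq_ofReal_add_of_sub_conj_eq {F G : ℂ → ℂ}
    (h : ∀ z ζ : ℂ, 0 < z.im → 0 < ζ.im → F z - conj (F ζ) = G z - conj (G ζ)) :
    ∃ b : ℝ, ∀ z : ℂ, 0 < z.im → G z = b + F z := by
  have hI : (0 : ℝ) < I.im := by simp
  have hreal : conj (G I - F I) = G I - F I := by
    rw [map_sub]
    linear_combination h I I hI hI
  refine ⟨(G I - F I).re, fun z hz => ?_⟩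
  rw [conj_eq_iff_re.mp hreal]
  rw [map_sub] at hreal
  linear_combination -(h z I hz hI) + hreal

section Resolvents

variable {X : Type*} {t p : X → ℝ}

lemma summable_norm_div_sub_ofReal_sq_mul (hp : ∀ x, 0 ≤ p x)
    (hb : Summable fun x => p x / (1 + t x ^ 2)) {z : ℂ} (hz : z.im ≠ 0) (c : ℂ) :
    Summable fun x => ‖c / (z - t x)‖ ^ 2 * p x := by
  refine ((summable_div_normSq_ofReal_sub hp hb hz).mul_left (‖c‖ ^ 2)).congr fun x => ?_
  rw [norm_div, norm_sub_rev, div_pow, ← normSq_eq_norm_sq ((t x : ℂ) - z)]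
  ring

lemma hasSum_div_sub_mul_div_sub_of_atomicHerglotz_eq (hp : ∀ x, 0 ≤ p x)
    (hb : Summable fun x => p x / (1 + t x ^ 2)) {s : ℝ} (hs : ∀ x, t x ≠ s)
    (hss : Summable fun x => p x / (s - t x) ^ 2) {α : ℝ} (hα : atomicHerglotz t p s = α)
    {z ψ : ℂ} (hz : z.im ≠ 0) (hψ : ψ * (α - atomicHerglotz t p z) = 1) :
    HasSum (fun x => ψ / (z - t x) * p x / (s - t x)) (1 / (s - z)) := by
  convert hasSum_div_sub_mul_div_sub hp hb hs hss hz ψ using 1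
  rw [hα, show ψ * (atomicHerglotz t p z - α) = -1 by linear_combination -hψ, neg_div, ← div_neg,
    neg_sub]

lemma atomicHerglotz_sub_conj_eq_of_forall_tsum_norm_add_mul_sq_eq {Y : Type*} {s q : Y → ℝ}
    (hp : ∀ x, 0 ≤ p x) (hb : Summable fun x => p x / (1 + t x ^ 2))
    (hq : ∀ y, 0 ≤ q y) (hbq : Summable fun y => q y / (1 + s y ^ 2))
    {ψ : ℂ → ℂ} {α : ℝ} (hψ : ∀ z : ℂ, 0 < z.im → ψ z * (α - atomicHerglotz t p z) = 1)
    {z ζ : ℂ} (hz : 0 < z.im) (hζ : 0 < ζ.im)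
    (h : ∀ c : ℂ, ∑' y, ‖1 / ((s y : ℂ) - z) + c * (1 / ((s y : ℂ) - ζ))‖ ^ 2 * q y
      = ∑' x, ‖ψ z / (z - t x) + c * (ψ ζ / (ζ - t x))‖ ^ 2 * p x) :
    atomicHerglotz s q z - conj (atomicHerglotz s q ζ) = ψ z - conj (ψ ζ) := by
  have htarget : ∀ w : ℂ, 0 < w.im → Summable fun y => ‖1 / ((s y : ℂ) - w)‖ ^ 2 * q y := by
    intro w hw
    refine (summable_norm_div_sub_ofReal_sq_mul hq hbq hw.ne' 1).congr fun y => ?_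
    rw [norm_div, norm_div, norm_sub_rev]
  have hinner := tsum_mul_conj_mul_eq_of_forall_tsum_norm_add_mul_sq_eq hq hp
    (htarget z hz) (htarget ζ hζ) (summable_norm_div_sub_ofReal_sq_mul hp hb hz.ne' (ψ z))
    (summable_norm_div_sub_ofReal_sq_mul hp hb hζ.ne' (ψ ζ)) h
  have hterm : ∀ x, ψ z / (z - t x) * conj (ψ ζ / (ζ - t x)) * p x
      = ψ z * conj (ψ ζ) * (1 / ((t x : ℂ) - z) * conj (1 / ((t x : ℂ) - ζ)) * p x) := fun x => by
    rw [← neg_sub (t x : ℂ) z, ← neg_sub (t x : ℂ) ζ]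
    simp only [map_div₀, map_neg, map_one, div_neg]
    ring
  have hψζ : conj (ψ ζ) * (α - conj (atomicHerglotz t p ζ)) = 1 := by
    simpa using congrArg (starRingEnd ℂ) (hψ ζ hζ)
  rw [tsum_congr hterm, tsum_mul_left] at hinner
  rw [← sub_conj_mul_tsum_resolvent_mul_conj_resolvent hq hbq hz hζ, hinner, mul_left_comm,
    sub_conj_mul_tsum_resolvent_mul_conj_resolvent hp hb hz hζ]
  linear_combination ψ z * hψζ - conj (ψ ζ) * hψ z hz

lemma normSq_ofReal_sub_I (s : ℝ) : normSq ((s : ℂ) - I) = 1 + s ^ 2 := by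
  simp [normSq_apply]
  ring

lemma isPurelyAtomicHerglotzRep_of_forall_tsum_norm_add_mul_sq_eq {Y : Type*} [Countable Y]
    {s q : Y → ℝ} (hp : ∀ x, 0 ≤ p x) (hb : Summable fun x => p x / (1 + t x ^ 2))
    (hq : ∀ y, 0 ≤ q y) {ψ : ℂ → ℂ} {α : ℝ}
    (hψ : ∀ z : ℂ, 0 < z.im → ψ z * (α - atomicHerglotz t p z) = 1)
    (h : ∀ z ζ : ℂ, 0 < z.im → 0 < ζ.im → ∀ c : ℂ,
      Summable (fun y => ‖1 / ((s y : ℂ) - z) + c * (1 / ((s y : ℂ) - ζ))‖ ^ 2 * q y) ∧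
      ∑' y, ‖1 / ((s y : ℂ) - z) + c * (1 / ((s y : ℂ) - ζ))‖ ^ 2 * q y
        = ∑' x, ‖ψ z / (z - t x) + c * (ψ ζ / (ζ - t x))‖ ^ 2 * p x) :
    IsPurelyAtomicHerglotzRep ψ := by
  have hI : (0 : ℝ) < I.im := by simp
  have hbq : Summable fun y => q y / (1 + s y ^ 2) := (h I I hI hI 0).1.congr fun y => by
    rw [zero_mul, add_zero, norm_div, norm_one, div_pow, ← normSq_eq_norm_sq, normSq_ofReal_sub_I]
    ring
  obtain ⟨b, hb⟩ := exists_eq_ofReal_add_of_sub_conj_eq fun z ζ hz hζ =>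
    atomicHerglotz_sub_conj_eq_of_forall_tsum_norm_add_mul_sq_eq hp hb hq hbq hψ hz hζ
      fun c => (h z ζ hz hζ c).2
  exact isPurelyAtomicHerglotzRep_of_eq_add_atomicHerglotz hq hbq b hb

end Resolvents

theorem stmt_13_general (γ : ℕ → ℝ) (v : ℕ → ℝ) (hv : ∀ n, 0 < v n)
    (hadm : Summable (fun n => v n / (1 + (γ n) ^ 2)))
    (φ : ℂ → ℂ)
    (hφ : ∀ z : ℂ, 0 < z.im → φ z = ∑' n, (v n : ℂ) *
      (1 / ((γ n : ℂ) - z) - (γ n : ℂ) / (1 + (γ n : ℂ) ^ 2)))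
    (α : ℝ)
    (hnotatomic : ¬ IsPurelyAtomicHerglotzRep (fun z => ((α : ℂ) - φ z)⁻¹))
    {ι : Type*} [Countable ι] (l : ι → ℝ)
    (hrange : ∀ x : ℝ, (∃ j, l j = x) ↔
      ((∀ n, x ≠ γ n) ∧ Summable (fun n => v n / (x - γ n) ^ 2) ∧
        ∑' n, v n * (1 / (γ n - x) - γ n / (1 + (γ n) ^ 2)) = α))
    (w : ι → ℝ) (hw : ∀ j, w j = (∑' n, v n / (l j - γ n) ^ 2)⁻¹)
    (H : (ℕ → ℂ) → ι → ℂ)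
    (hH : ∀ a j, H a j = ∑' n, a n * (v n : ℂ) / ((l j : ℂ) - (γ n : ℂ))) :
    ¬ ((∀ a : ℕ → ℂ, Summable (fun n => ‖a n‖ ^ 2 * v n) →
      Summable (fun j => ‖H a j‖ ^ 2 * w j) ∧
      ∑' j, ‖H a j‖ ^ 2 * w j = ∑' n, ‖a n‖ ^ 2 * v n) ∧
    (∀ b : ι → ℂ, Summable (fun j => ‖b j‖ ^ 2 * w j) →
      ∃ a : ℕ → ℂ, Summable (fun n => ‖a n‖ ^ 2 * v n) ∧ ∀ j, H a j = b j)) := by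
  rintro ⟨hiso, -⟩
  apply hnotatomic
  set ψ : ℂ → ℂ := fun z => ((α : ℂ) - φ z)⁻¹
  have hv₀ : ∀ n, 0 ≤ v n := fun n => (hv n).le
  have hψ : ∀ z : ℂ, 0 < z.im → ψ z * (α - atomicHerglotz γ v z) = 1 := fun z hz => by
    have hφz : φ z = atomicHerglotz γ v z := hφ z hz
    have hne : (α : ℂ) - atomicHerglotz γ v z ≠ 0 := fun h =>
      (im_atomicHerglotz_pos hv₀ hadm (hv 0) hz).ne' (by simpa using congrArg Complex.im h)
    simp only [ψ, hφz]
    exact inv_mul_cancel₀ hne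
  have hlevel : ∀ j, (∀ n, γ n ≠ l j) ∧ Summable (fun n => v n / (l j - γ n) ^ 2) ∧
      atomicHerglotz γ v (l j) = α := fun j => by
    obtain ⟨hne, hsum, hα⟩ := (hrange (l j)).mp ⟨j, rfl⟩
    exact ⟨fun n => (hne n).symm, hsum, by rw [atomicHerglotz_ofReal, hα]⟩
  have hw₀ : ∀ j, 0 ≤ w j := fun j => by
    rw [hw j]
    exact inv_nonneg.mpr (tsum_nonneg fun n => div_nonneg (hv₀ n) (sq_nonneg _))
  refine isPurelyAtomicHerglotzRep_of_forall_tsum_norm_add_mul_sq_eq (s := l) hv₀ hadm hw₀ hψ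
    fun z ζ hz hζ c => ?_
  have hHa : ∀ j, H (fun n => ψ z / (z - γ n) + c * (ψ ζ / (ζ - γ n))) j
      = 1 / ((l j : ℂ) - z) + c * (1 / ((l j : ℂ) - ζ)) := fun j => by
    have hres := fun (u : ℂ) (hu : 0 < u.im) => hasSum_div_sub_mul_div_sub_of_atomicHerglotz_eq
      hv₀ hadm (hlevel j).1 (hlevel j).2.1 (hlevel j).2.2 hu.ne' (hψ u hu)
    rw [hH, ← ((hres z hz).add ((hres ζ hζ).mul_left c)).tsum_eq]
    exact tsum_congr fun n => by ring
  simpa only [hHa] using hiso _ (hasSum_norm_add_mul_sq_mul hv₀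
    (summable_norm_div_sub_ofReal_sq_mul hv₀ hadm hz.ne' (ψ z))
    (summable_norm_div_sub_ofReal_sq_mul hv₀ hadm hζ.ne' (ψ ζ)) c).summable

/-- If `(α - φ)⁻¹` is NOT a purely atomic Herglotz function, then the discrete Hilbert
transform `H_v(Γ, Λ(α)) : ℓ²_v → ℓ²_{w(α)}` is not unitary. -/
theorem stmt_13 (γ : ℕ → ℝ) (hγ : Function.Injective γ) (v : ℕ → ℝ) (hv : ∀ n, 0 < v n)
    (hadm : Summable (fun n => v n / (1 + (γ n) ^ 2)))
    (φ : ℂ → ℂ)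
    (hφ : ∀ z : ℂ, 0 < z.im → φ z = ∑' n, (v n : ℂ) *
      (1 / ((γ n : ℂ) - z) - (γ n : ℂ) / (1 + (γ n : ℂ) ^ 2)))
    (α : ℝ)
    (hnotatomic : ¬ IsPurelyAtomicHerglotzRep (fun z => ((α : ℂ) - φ z)⁻¹))
    {ι : Type*} [Countable ι] (l : ι → ℝ) (hl : Function.Injective l)
    (hrange : ∀ x : ℝ, (∃ j, l j = x) ↔
      ((∀ n, x ≠ γ n) ∧ Summable (fun n => v n / (x - γ n) ^ 2) ∧
        ∑' n, v n * (1 / (γ n - x) - γ n / (1 + (γ n) ^ 2)) = α))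
    (w : ι → ℝ) (hw : ∀ j, w j = (∑' n, v n / (l j - γ n) ^ 2)⁻¹)
    (H : (ℕ → ℂ) → ι → ℂ)
    (hH : ∀ a j, H a j = ∑' n, a n * (v n : ℂ) / ((l j : ℂ) - (γ n : ℂ))) :
    ¬ ((∀ a : ℕ → ℂ, Summable (fun n => ‖a n‖ ^ 2 * v n) →
      Summable (fun j => ‖H a j‖ ^ 2 * w j) ∧
      ∑' j, ‖H a j‖ ^ 2 * w j = ∑' n, ‖a n‖ ^ 2 * v n) ∧
    (∀ b : ι → ℂ, Summable (fun j => ‖b j‖ ^ 2 * w j) →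
      ∃ a : ℕ → ℂ, Summable (fun n => ‖a n‖ ^ 2 * v n) ∧ ∀ j, H a j = b j)) :=
  stmt_13_general γ v hv hadm φ hφ α hnotatomic l hrange w hw H hH
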